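/- For a positive integer n, let s(n) denote the smallest prime that does not divide n. Then the averages (1/N) \sum_{n=1}^{N} s(n) converge as N \to \infty, and their limit equals f_1 = \sum_{k=1}^\infty (p_k - 1)/(p_1 p_2 \cdots p_{k-1}). -/

import Mathlib

open scoped BigOperators

/-- `p k` is the `(k+1)`-st prime, i.e. the paper's `p_{k+1}` (so `p 0 = 2`). -/
noncomputable def p (k : ℕ) : ℕ := Nat.nth Nat.Prime k

/-- The `k`-th summand `(p_{k+1} - 1) / (p_1 ⋯ p_k)` of the series (0-indexed). -/
noncomputable def primeTerm (k : ℕ) : ℝ :=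
  ((p k : ℝ) - 1) / ∏ i ∈ Finset.range k, (p i : ℝ)

/-- `s n` is the smallest prime that does not divide `n`. -/
noncomputable def s (n : ℕ) : ℕ := sInf {q | q.Prime ∧ ¬ q ∣ n}

/-!
Write `P j = p 0 ⋯ p (j - 1)` (this is `firstPrimesProd j`). For `n ≥ 1`, `s n = p j` exactly when
`P j ∣ n` and `P (j + 1) ∤ n`, so `⌊N / P j⌋ - ⌊N / P (j + 1)⌋` of the `n ∈ [1, N]` have
`s n = p j`, and the `N`-th average is the series `∑ⱼ p j (⌊N / P j⌋ - ⌊N / P (j + 1)⌋) / N`.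
Its `j`-th term tends to `p j (1 / P j - 1 / P (j + 1)) = primeTerm j` and is at most
`p j / P j ≤ 4 ⋅ 2⁻ʲ`, because Bertrand's postulate gives `p (j + 1) ≤ 2 p j`. Tannery's theorem
(dominated convergence for series) therefore lets the limit pass through the sum.
-/

open Filter Topology Finset

lemma prime_p (k : ℕ) : (p k).Prime := Nat.prime_nth_prime k

lemma p_strictMono : StrictMono p := Nat.nth_strictMono Nat.infinite_setOfPred_prime

lemma p_count {q : ℕ} (hq : q.Prime) : p (Nat.count Nat.Prime q) = q := Nat.nth_count hq

lemma p_succ_le_two_mul (k : ℕ) : p (k + 1) ≤ 2 * p k := by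
  obtain ⟨q, hq, hkq, hq2⟩ := Nat.exists_prime_lt_and_le_two_mul (p k) (prime_p k).ne_zero
  have hk : k < Nat.count Nat.Prime q := p_strictMono.lt_iff_lt.mp (by rwa [p_count hq])
  calc p (k + 1) ≤ p (Nat.count Nat.Prime q) := p_strictMono.monotone hk
    _ = q := p_count hq
    _ ≤ 2 * p k := hq2

noncomputable def firstPrimesProd (k : ℕ) : ℕ := ∏ i ∈ range k, p i

lemma firstPrimesProd_succ (k : ℕ) : firstPrimesProd (k + 1) = firstPrimesProd k * p k :=
  prod_range_succ _ _

lemma firstPrimesProd_dvd_succ (k : ℕ) : firstPrimesProd k ∣ firstPrimesProd (k + 1) :=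
  Dvd.intro _ (firstPrimesProd_succ k).symm

lemma firstPrimesProd_pos (k : ℕ) : 0 < firstPrimesProd k :=
  prod_pos fun i _ => (prime_p i).pos

lemma two_pow_le_firstPrimesProd (k : ℕ) : 2 ^ k ≤ firstPrimesProd k := by
  simpa [firstPrimesProd] using prod_le_prod' (s := range k) fun i _ => (prime_p i).two_le

lemma firstPrimesProd_dvd_iff {k n : ℕ} : firstPrimesProd k ∣ n ↔ ∀ i < k, p i ∣ n := by
  refine ⟨fun h i hi => (dvd_prod_of_mem p (mem_range.2 hi)).trans h, fun h => ?_⟩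
  have := prod_primes_dvd (s := (range k).image p) n (by simpa using fun i _ => (prime_p i).prime)
    (by simpa using h)
  rwa [prod_image p_strictMono.injective.injOn] at this

lemma s_spec {n : ℕ} (hn : n ≠ 0) : (s n).Prime ∧ ¬ s n ∣ n := by
  obtain ⟨q, hnq, hq⟩ := Nat.exists_infinite_primes (n + 1)
  exact Nat.sInf_mem (s := {q | q.Prime ∧ ¬ q ∣ n})
    ⟨q, hq, fun h => by have := Nat.le_of_dvd (Nat.pos_of_ne_zero hn) h; omega⟩

lemma dvd_of_lt_s {n q : ℕ} (hq : q.Prime) (h : q < s n) : q ∣ n := by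
  by_contra hqn
  exact (Nat.sInf_le ⟨hq, hqn⟩ : s n ≤ q).not_gt h

noncomputable def sIndex (n : ℕ) : ℕ := Nat.count Nat.Prime (s n)

lemma p_sIndex {n : ℕ} (hn : n ≠ 0) : p (sIndex n) = s n := p_count (s_spec hn).1

lemma firstPrimesProd_dvd_iff_le_sIndex {n k : ℕ} (hn : n ≠ 0) :
    firstPrimesProd k ∣ n ↔ k ≤ sIndex n := by
  rw [firstPrimesProd_dvd_iff]
  refine ⟨fun h => not_lt.1 fun hk => (s_spec hn).2 ?_, fun hk i hi => ?_⟩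
  · simpa only [p_sIndex hn] using h _ hk
  · exact dvd_of_lt_s (prime_p i) (p_sIndex hn ▸ p_strictMono (hi.trans_le hk))

lemma card_sIndex_eq (N j : ℕ) :
    (#{n ∈ Icc 1 N | sIndex n = j} : ℝ) =
      ((N / firstPrimesProd j : ℕ) : ℝ) - (N / firstPrimesProd (j + 1) : ℕ) := by
  have hfilter : {n ∈ Icc 1 N | sIndex n = j} =
      {n ∈ Ioc 0 N | firstPrimesProd j ∣ n} \ {n ∈ Ioc 0 N | firstPrimesProd (j + 1) ∣ n} := by
    ext n
    simp only [Finset.mem_sdiff, mem_filter, mem_Icc, mem_Ioc]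
    rcases Nat.eq_zero_or_pos n with rfl | hn
    · omega
    rw [firstPrimesProd_dvd_iff_le_sIndex hn.ne', firstPrimesProd_dvd_iff_le_sIndex hn.ne']
    omega
  have hsub :
      {n ∈ Ioc 0 N | firstPrimesProd (j + 1) ∣ n} ⊆ {n ∈ Ioc 0 N | firstPrimesProd j ∣ n} :=
    monotone_filter_right _ fun n _ h => (firstPrimesProd_dvd_succ j).trans h
  rw [hfilter, card_sdiff_of_subset hsub, Nat.cast_sub (card_le_card hsub),
    Nat.Ioc_filter_dvd_card_eq_div, Nat.Ioc_filter_dvd_card_eq_div]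

lemma tendsto_nat_div_div_atTop {R : Type*} [TopologicalSpace R] [Field R] [LinearOrder R]
    [IsStrictOrderedRing R] [OrderTopology R] [FloorRing R] (m : ℕ) :
    Tendsto (fun N : ℕ => ((N / m : ℕ) : R) / N) atTop (𝓝 (1 / m)) := by
  refine ((tendsto_nat_floor_mul_div_atTop (by positivity : (0 : R) ≤ 1 / m)).comp
    tendsto_natCast_atTop_atTop).congr fun N => ?_
  simp only [Function.comp_apply, one_div_mul_eq_div, Nat.floor_div_eq_div]

noncomputable def primeContribution (N j : ℕ) : ℝ :=
  p j * (((N / firstPrimesProd j : ℕ) : ℝ) - (N / firstPrimesProd (j + 1) : ℕ)) / N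

lemma average_s_eq_tsum (N : ℕ) :
    (∑ n ∈ Icc 1 N, (s n : ℝ)) / N = ∑' j, primeContribution N j := by
  have hs : ∀ n ∈ Icc 1 N, (s n : ℝ) = p (sIndex n) := fun n hn => by
    rw [p_sIndex (by rw [mem_Icc] at hn; omega)]
  rw [sum_congr rfl hs, sum_comp (fun j => (p j : ℝ)) sIndex, sum_div,
    tsum_eq_sum (s := (Icc 1 N).image sIndex)]
  · refine sum_congr rfl fun j _ => ?_
    rw [primeContribution, ← card_sIndex_eq, nsmul_eq_mul, mul_comm]
  · intro j hj
    rw [primeContribution, ← card_sIndex_eq, card_eq_zero.2, Nat.cast_zero, mul_zero, zero_div]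
    exact filter_eq_empty_iff.2 fun n hn hnj => hj (mem_image.2 ⟨n, hn, hnj⟩)

lemma primeTerm_eq (j : ℕ) :
    primeTerm j = p j * (1 / firstPrimesProd j - 1 / firstPrimesProd (j + 1) : ℝ) := by
  have hP : (firstPrimesProd j : ℝ) ≠ 0 := by exact_mod_cast (firstPrimesProd_pos j).ne'
  have hp : (p j : ℝ) ≠ 0 := by exact_mod_cast (prime_p j).ne_zero
  have hprod : ∏ i ∈ range j, (p i : ℝ) = firstPrimesProd j := by
    rw [firstPrimesProd, Nat.cast_prod]
  rw [primeTerm, hprod, firstPrimesProd_succ, Nat.cast_mul]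
  field_simp

lemma tendsto_primeContribution (j : ℕ) :
    Tendsto (primeContribution · j) atTop (𝓝 (primeTerm j)) := by
  rw [primeTerm_eq]
  refine (((tendsto_nat_div_div_atTop _).sub (tendsto_nat_div_div_atTop _)).const_mul _).congr
    fun N => ?_
  rw [primeContribution, ← sub_div, mul_div_assoc]

lemma primeContribution_nonneg (N j : ℕ) : 0 ≤ primeContribution N j := by
  rw [primeContribution, ← card_sIndex_eq]
  positivity

lemma primeContribution_le (N j : ℕ) : primeContribution N j ≤ p j / firstPrimesProd j := by
  rcases N.eq_zero_or_pos with rfl | hN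
  · rw [primeContribution, Nat.cast_zero, div_zero]
    positivity
  have hP : (0 : ℝ) < firstPrimesProd j := by exact_mod_cast firstPrimesProd_pos j
  have hN' : (0 : ℝ) < N := by exact_mod_cast hN
  calc primeContribution N j ≤ p j * ((N / firstPrimesProd j : ℕ) : ℝ) / N := by
        unfold primeContribution
        gcongr
        exact sub_le_self _ (Nat.cast_nonneg _)
    _ ≤ p j * (N / firstPrimesProd j) / N := by gcongr; exact Nat.cast_div_le
    _ = p j / firstPrimesProd j := by field_simp

lemma p_div_firstPrimesProd_le (j : ℕ) : (p j : ℝ) / firstPrimesProd j ≤ 4 * (1 / 2) ^ j := by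
  rcases j with _ | k
  · norm_num [p, firstPrimesProd, Nat.nth_prime_zero_eq_two]
  have hP : (2 : ℝ) ^ k ≤ firstPrimesProd k := by exact_mod_cast two_pow_le_firstPrimesProd k
  have hp : (0 : ℝ) < p k := by exact_mod_cast (prime_p k).pos
  have h2 : (p (k + 1) : ℝ) ≤ 2 * p k := by exact_mod_cast p_succ_le_two_mul k
  calc (p (k + 1) : ℝ) / firstPrimesProd (k + 1) ≤ 2 * p k / (firstPrimesProd k * p k) := by
        rw [firstPrimesProd_succ, Nat.cast_mul]; gcongr
    _ = 2 / firstPrimesProd k := by field_simp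
    _ ≤ 2 / 2 ^ k := by gcongr
    _ = 4 * (1 / 2) ^ (k + 1) := by rw [one_div_pow, pow_succ]; field_simp; norm_num

/-- The averages `(1/N) ∑_{n=1}^N s(n)` converge to
`f_1 = ∑_{k=1}^∞ (p_k - 1)/(p_1 ⋯ p_{k-1})`. -/
theorem statement8 :
    Filter.Tendsto (fun N : ℕ => (∑ n ∈ Finset.Icc 1 N, (s n : ℝ)) / N)
      Filter.atTop (nhds (∑' k, primeTerm k)) := by
  simp_rw [average_s_eq_tsum]
  refine tendsto_tsum_of_dominated_convergence (summable_geometric_two.mul_left 4)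
    tendsto_primeContribution (Eventually.of_forall fun N j => ?_)
  rw [Real.norm_of_nonneg (primeContribution_nonneg N j)]
  exact (primeContribution_le N j).trans (p_div_firstPrimesProd_le j)
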